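/- arXiv:1406.0940 — 3 statements merged into one kernel-verified Lean document; each statement's English description precedes it below -/
import Mathlib

section
/- If a graph G is the competition graph of a d-partial order, then G is also the competition graph of a (d+1)-partial order. -/
/-!
Append to each point of `ℝ^d` the sum of its coordinates. For `d ≥ 1` this map preserves and
reflects `≺` (summing strict coordinatewise inequalities gives a strict inequality), so it carries
`D_S` isomorphically onto `D_T` for the image `T ⊆ ℝ^(d+1)`, and competition graphs only depend on
the digraph up to isomorphism.
-/

/-- `x ≺ y` componentwise strictly. -/
def prec {d : ℕ} (x y : Fin d → ℝ) : Prop := ∀ i, x i < y i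

/-- The competition graph of the digraph with arc relation `A`. -/
def competition {V : Type*} (A : V → V → Prop) : SimpleGraph V where
  Adj u v := u ≠ v ∧ ∃ w, A u w ∧ A v w
  symm := by
    constructor
    intro u v h
    exact ⟨h.1.symm, h.2.imp fun w hw => ⟨hw.2, hw.1⟩⟩
  loopless := by
    constructor
    intro u h
    exact h.1 rfl

/-- The competition graph of the `d`-partial order `D_S`. -/
def compS {d : ℕ} (S : Finset (Fin d → ℝ)) : SimpleGraph S :=
  competition fun x v => prec v.1 x.1

/-- `G` together with `k` added isolated vertices. -/
def addIsolated {V : Type*} (G : SimpleGraph V) (k : ℕ) : SimpleGraph (V ⊕ Fin k) where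
  Adj u v := ∃ a b, G.Adj a b ∧ u = Sum.inl a ∧ v = Sum.inl b
  symm := by
    constructor
    rintro u v ⟨a, b, hab, rfl, rfl⟩
    exact ⟨b, a, hab.symm, rfl, rfl⟩
  loopless := by
    constructor
    rintro u ⟨a, b, hab, rfl, h⟩
    exact hab.ne (Sum.inl.inj h)

/-- `dim_poc G ≤ d`. -/
def pocDimLE {V : Type*} [Fintype V] (G : SimpleGraph V) (d : ℕ) : Prop :=
  ∃ k : ℕ, ∃ S : Finset (Fin d → ℝ), Nonempty (compS S ≃g addIsolated G k)

/-- The partial order competition dimension of `G`. -/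
noncomputable def pocDim {V : Type*} [Fintype V] (G : SimpleGraph V) : ℕ :=
  sInf {d | pocDimLE G d}

def competitionIsoOfRelIff {α β : Type*} {A : α → α → Prop} {B : β → β → Prop} (e : α ≃ β)
    (h : ∀ x y, B (e x) (e y) ↔ A x y) : competition A ≃g competition B where
  toEquiv := e
  map_rel_iff' {u v} := and_congr e.injective.ne_iff <|
    e.surjective.exists.trans <| exists_congr fun w => and_congr (h u w) (h v w)

def SimpleGraph.isoOfSubsingleton {V W : Type*} [Subsingleton V] (G : SimpleGraph V)
    (H : SimpleGraph W) (e : V ≃ W) : G ≃g H :=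
  ⟨e, fun {a b} => by simp [Subsingleton.elim a b]⟩

noncomputable def Finset.equivImage {α β : Type*} [DecidableEq β] (s : Finset α) (f : α → β)
    (hf : Function.Injective f) : s ≃ s.image f :=
  (Equiv.Set.image f s hf).trans (Equiv.setCongr (Finset.coe_image).symm)

noncomputable def compSIsoImage {d d' : ℕ} (S : Finset (Fin d → ℝ))
    (f : (Fin d → ℝ) → (Fin d' → ℝ)) (hf : Function.Injective f)
    (h : ∀ x y, prec (f x) (f y) ↔ prec x y) : compS S ≃g compS (S.image f) :=
  competitionIsoOfRelIff (S.equivImage f hf) fun x v => h v x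

def appendSum {d : ℕ} (x : Fin d → ℝ) : Fin (d + 1) → ℝ := Fin.snoc x (∑ i, x i)

theorem appendSum_injective {d : ℕ} : Function.Injective (appendSum (d := d)) := by
  intro x y hxy
  funext i
  simpa [appendSum] using congrFun hxy i.castSucc

theorem prec_appendSum_iff {d : ℕ} [NeZero d] {x y : Fin d → ℝ} :
    prec (appendSum x) (appendSum y) ↔ prec x y := by
  refine ⟨fun h i => by simpa [appendSum] using h i.castSucc, fun h => Fin.lastCases ?_ ?_⟩
  · simpa [appendSum] using Finset.sum_lt_sum_of_nonempty Finset.univ_nonempty fun i _ => h i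
  · exact fun j => by simpa [appendSum] using h j

/- For `d = 0` the relation `≺` holds between any two points, so `appendSum` cannot preserve it;
there, however, `S` has at most one point and both competition graphs are empty. -/
theorem nonempty_compS_iso_image_appendSum {d : ℕ} (S : Finset (Fin d → ℝ)) :
    Nonempty (compS S ≃g compS (S.image appendSum)) := by
  rcases eq_zero_or_neZero d with rfl | _
  · exact ⟨SimpleGraph.isoOfSubsingleton _ _ (S.equivImage _ appendSum_injective)⟩
  · exact ⟨compSIsoImage S _ appendSum_injective fun _ _ => prec_appendSum_iff⟩

/-- If `G` is the competition graph of a `d`-partial order, then `G` is the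
competition graph of a `(d+1)`-partial order. -/
theorem stmt9 {V : Type*} (G : SimpleGraph V) (d : ℕ)
    (S : Finset (Fin d → ℝ)) (h : Nonempty (compS S ≃g G)) :
    ∃ T : Finset (Fin (d + 1) → ℝ), Nonempty (compS T ≃g G) := by
  obtain ⟨φ⟩ := h
  obtain ⟨ψ⟩ := nonempty_compS_iso_image_appendSum S
  exact ⟨_, ⟨ψ.symm.trans φ⟩⟩
end

section
/- For every finite graph G, there exist a positive integer d, a nonnegative integer k, and a finite set S ⊆ ℝ^d such that the competition graph of D_S is isomorphic to the disjoint union of G and k isolated vertices; moreover one can take d = |V(G)| and k = |E(G)|. -/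
/-!
Index the coordinates of `ℝ^|V|` by the vertices. Vertex `v` becomes the point that is `0` at
coordinate `v` and `1` elsewhere, and an edge `e` the point that is `-1` on the two coordinates
of `e` and `0` elsewhere. Then the only strict dominations are "edge `e` lies below vertex `v`"
with `v ∈ e`, so two vertices compete exactly when they span an edge, and the edge points,
dominating nothing, are isolated.
-/

section

open Function Finset

variable {V ι W : Type*}

def incidenceArc (σ : ι → Sym2 V) : V ⊕ ι → V ⊕ ι → Prop
  | .inl v, .inr i => v ∈ σ i
  | _, _ => False

theorem competition_incidenceArc (G : SimpleGraph V) {k : ℕ} (σ : Fin k ≃ G.edgeSet) :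
    competition (incidenceArc fun i => (σ i : Sym2 V)) = addIsolated G k := by
  ext a b
  constructor
  · rintro ⟨hab, c, hac, hbc⟩
    rcases a with u | _ <;> rcases b with v | _ <;> rcases c with _ | i <;>
      simp only [incidenceArc] at hac hbc
    have huv : u ≠ v := fun h => hab (congrArg Sum.inl h)
    have hσ : (σ i : Sym2 V) = s(u, v) := (Sym2.mem_and_mem_iff huv).mp ⟨hac, hbc⟩
    exact ⟨u, v, (hσ ▸ (σ i).2 : s(u, v) ∈ G.edgeSet), rfl, rfl⟩
  · rintro ⟨u, v, huv, rfl, rfl⟩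
    refine ⟨fun h => huv.ne (Sum.inl.inj h), .inr (σ.symm ⟨s(u, v), huv⟩), ?_, ?_⟩ <;>
      simp [incidenceArc]

noncomputable def compSMapIso {d : ℕ} [Fintype W] {f : W → Fin d → ℝ} (hf : Injective f)
    {R : W → W → Prop} (hR : ∀ a b, prec (f b) (f a) ↔ R a b) :
    compS (univ.map ⟨f, hf⟩) ≃g competition R := by
  let e : W ≃ univ.map ⟨f, hf⟩ :=
    Equiv.ofBijective (fun a => ⟨f a, mem_map_of_mem _ (mem_univ a)⟩)
      ⟨fun a b h => hf (Subtype.ext_iff.mp h), by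
        rintro ⟨x, hx⟩
        obtain ⟨a, -, rfl⟩ := mem_map.mp hx
        exact ⟨a, rfl⟩⟩
  refine ⟨e.symm, fun {x y} => ?_⟩
  obtain ⟨a, rfl⟩ := e.surjective x
  obtain ⟨b, rfl⟩ := e.surjective y
  simp only [Equiv.symm_apply_apply]
  change (a ≠ b ∧ ∃ c, R a c ∧ R b c) ↔
    (e a ≠ e b ∧ ∃ w : univ.map ⟨f, hf⟩, prec w.1 (f a) ∧ prec w.1 (f b))
  rw [e.injective.ne_iff, e.surjective.exists]
  exact and_congr_right fun _ => exists_congr fun c => (and_congr (hR a c) (hR b c)).symm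

variable {d : ℕ} (ν : V ≃ Fin d)

def vertexPoint (v : V) : Fin d → ℝ := fun i => if i = ν v then 0 else 1

def edgePoint [DecidableEq V] (e : Sym2 V) : Fin d → ℝ := fun i => if ν.symm i ∈ e then -1 else 0

def incidencePoint [DecidableEq V] (σ : ι → Sym2 V) : V ⊕ ι → Fin d → ℝ :=
  Sum.elim (vertexPoint ν) fun i => edgePoint ν (σ i)

theorem vertexPoint_nonneg (v : V) (i : Fin d) : 0 ≤ vertexPoint ν v i := by
  unfold vertexPoint; split_ifs <;> norm_num

theorem vertexPoint_apply_self (v : V) : vertexPoint ν v (ν v) = 0 := if_pos rfl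

theorem not_prec_vertexPoint {x : Fin d → ℝ} (hx : ∀ i, 0 ≤ x i) (v : V) :
    ¬ prec x (vertexPoint ν v) :=
  fun h => (h (ν v)).not_ge (by rw [vertexPoint_apply_self]; exact hx _)

theorem vertexPoint_injective : Injective (vertexPoint ν) := by
  intro u v h
  exact (by simpa [vertexPoint] using congrFun h (ν v) : v = u).symm

variable [DecidableEq V]

theorem neg_one_le_edgePoint (e : Sym2 V) (i : Fin d) : -1 ≤ edgePoint ν e i := by
  unfold edgePoint; split_ifs <;> norm_num

theorem edgePoint_apply_of_mem {e : Sym2 V} {v : V} (h : v ∈ e) : edgePoint ν e (ν v) = -1 := by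
  simp [edgePoint, h]

theorem not_prec_edgePoint {x : Fin d → ℝ} (hx : ∀ i, -1 ≤ x i) (e : Sym2 V) :
    ¬ prec x (edgePoint ν e) :=
  fun h => (h (ν e.out.1)).not_ge (by rw [edgePoint_apply_of_mem ν e.out_fst_mem]; exact hx _)

theorem prec_edgePoint_vertexPoint_iff {e : Sym2 V} {v : V} :
    prec (edgePoint ν e) (vertexPoint ν v) ↔ v ∈ e := by
  refine ⟨fun h => ?_, fun h i => ?_⟩
  · by_contra hv
    simpa [edgePoint, vertexPoint, hv] using h (ν v)
  · by_cases hi : i = ν v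
    · subst hi; simp [edgePoint, vertexPoint, h]
    · simp only [vertexPoint, hi, if_false]
      unfold edgePoint; split_ifs <;> norm_num

theorem prec_incidencePoint_iff (σ : ι → Sym2 V) (a b : V ⊕ ι) :
    prec (incidencePoint ν σ a) (incidencePoint ν σ b) ↔ incidenceArc σ b a := by
  rcases a with u | i <;> rcases b with v | j <;>
    simp only [incidencePoint, Sum.elim_inl, Sum.elim_inr, incidenceArc, iff_false]
  · exact not_prec_vertexPoint ν (vertexPoint_nonneg ν u) v
  · exact not_prec_edgePoint ν (fun i => neg_one_lt_zero.le.trans (vertexPoint_nonneg ν u i)) _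
  · exact prec_edgePoint_vertexPoint_iff ν
  · exact not_prec_edgePoint ν (neg_one_le_edgePoint ν _) _

theorem edgePoint_injective : Injective (edgePoint ν) := by
  refine fun e e' h => Sym2.ext fun v => ?_
  have := congrFun h (ν v)
  simp only [edgePoint, Equiv.symm_apply_apply] at this
  split_ifs at this <;> simp_all

theorem vertexPoint_ne_edgePoint (v : V) (e : Sym2 V) : vertexPoint ν v ≠ edgePoint ν e := by
  intro h
  have := congrFun h (ν e.out.1)
  rw [edgePoint_apply_of_mem ν e.out_fst_mem] at this
  linarith [vertexPoint_nonneg ν v (ν e.out.1)]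

theorem incidencePoint_injective {σ : ι → Sym2 V} (hσ : Injective σ) :
    Injective (incidencePoint ν σ) := by
  rintro (u | i) (v | j) h
  · exact congrArg _ (vertexPoint_injective ν h)
  · exact absurd h (vertexPoint_ne_edgePoint ν _ _)
  · exact absurd h.symm (vertexPoint_ne_edgePoint ν _ _)
  · exact congrArg _ (hσ (edgePoint_injective ν h))

end

/-- Every finite graph together with `|E(G)|` isolated vertices is the
competition graph of an `|V(G)|`-partial order. -/
theorem stmt11 {V : Type*} [Fintype V] [DecidableEq V] (G : SimpleGraph V)
    [DecidableRel G.Adj] :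
    ∃ S : Finset (Fin (Fintype.card V) → ℝ),
      Nonempty (compS S ≃g addIsolated G G.edgeFinset.card) := by
  let σ : Fin G.edgeFinset.card ≃ G.edgeSet :=
    (Fintype.equivFinOfCardEq G.edgeFinset_card.symm).symm
  have hf := incidencePoint_injective (Fintype.equivFin V) (Subtype.val_injective.comp σ.injective)
  refine ⟨Finset.univ.map ⟨_, hf⟩, ⟨?_⟩⟩
  rw [← competition_incidenceArc G σ]
  exact compSMapIso hf fun a b => prec_incidencePoint_iff _ _ b a
end

section
/- Let D be a finite transitive acyclic digraph with competition graph G. Then for every vertex u that is non-isolated in G, there exists a vertex v that is isolated in G such that (u,v) is an arc of D. -/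
theorem not_competition_adj_of_forall_not_rel {V : Type*} {A : V → V → Prop} {v : V}
    (hv : ∀ y, ¬ A v y) (w : V) : ¬ (competition A).Adj v w :=
  fun ⟨_, y, hvy, _⟩ => hv y hvy

/-- An `A`-maximal out-neighbour of `u` is a sink, because by transitivity each of its
out-neighbours is again an out-neighbour of `u`. -/
theorem exists_rel_forall_not_rel {V : Type*} [Finite V] {A : V → V → Prop}
    (htrans : ∀ a b c, A a b → A b c → A a c) (hirrefl : ∀ a, ¬ A a a) {u x : V}
    (hux : A u x) : ∃ v, A u v ∧ ∀ y, ¬ A v y := by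
  have : IsTrans V (flip A) := ⟨fun a b c hab hbc => htrans c b a hbc hab⟩
  have : Std.Irrefl (flip A) := ⟨hirrefl⟩
  obtain ⟨v, huv, hmax⟩ :=
    (Finite.wellFounded_of_trans_of_irrefl (flip A)).has_min {y | A u y} ⟨x, hux⟩
  exact ⟨v, huv, fun y hvy => hmax y (htrans u v y huv hvy) hvy⟩

/-- In a finite transitive acyclic digraph, every vertex non-isolated in the
competition graph has an arc to a vertex isolated in the competition graph. -/
theorem stmt14 {V : Type*} [Fintype V] (A : V → V → Prop)
    (htrans : ∀ a b c, A a b → A b c → A a c)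
    (hacyc : ∀ a, ¬ Relation.TransGen A a a)
    (u : V) (hu : ∃ w, (competition A).Adj u w) :
    ∃ v, (∀ w, ¬ (competition A).Adj v w) ∧ A u v := by
  obtain ⟨_, -, x, hux, -⟩ := hu
  obtain ⟨v, huv, hsink⟩ :=
    exists_rel_forall_not_rel htrans (fun a ha => hacyc a (.single ha)) hux
  exact ⟨v, not_competition_adj_of_forall_not_rel hsink, huv⟩
end
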